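/- Convergence of the acceptance-length bound (Remark 5.2, convergence): Suppose that for every 1 ≤ i ≤ L and every x^i ∈ Ω^i, q(x^i) > 0 implies p(x^i) > 0. Then Bound(K) ≤ L for every K ≥ 1, and Bound(K) tends to L as K → ∞. -/
import Mathlib


attribute [local instance] Classical.propDecidable

noncomputable section

/-- `s ∈ Ω^L` has the length-`i` prefix `x ∈ Ω^i`. -/
def HasPref {Ω : Type*} {L i : ℕ} (s : Fin L → Ω) (x : Fin i → Ω) : Prop :=
  ∀ j : Fin L, ∀ hj : (j : ℕ) < i, s j = x ⟨(j : ℕ), hj⟩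

/-- Mass of the length-`i` prefix `x` under the block distribution `p` on `Ω^L`. -/
def prefProb {Ω : Type*} [Fintype Ω] {L i : ℕ} (p : (Fin L → Ω) → ℝ) (x : Fin i → Ω) : ℝ :=
  ∑ s : Fin L → Ω, if HasPref s x then p s else 0

/-- `Bound(K) = Σ_{i=1}^{L} Σ_{x^i ∈ Ω^i} q(x^i)·[1 − (1 − min{p(x^i)/q(x^i), 1})^K]`
(the summand with `q(x^i) = 0` is automatically `0`). -/
def Bound {Ω : Type*} [Fintype Ω] {L : ℕ} (p q : (Fin L → Ω) → ℝ) (K : ℕ) : ℝ :=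
  ∑ i ∈ Finset.range L, ∑ x : Fin (i + 1) → Ω,
    prefProb q x * (1 - (1 - min (prefProb p x / prefProb q x) 1) ^ K)

/-- `π` is a coupling of `p^{⊗K}` and `q`: a pmf on `(Ω^L)^K × Ω^L` whose
`(X_1, …, X_K)`-marginal is the `K`-fold product of `p` and whose `Y`-marginal is `q`. -/
def IsCoupling {Ω : Type*} [Fintype Ω] {L K : ℕ} (p q : (Fin L → Ω) → ℝ)
    (π : (Fin K → Fin L → Ω) × (Fin L → Ω) → ℝ) : Prop :=
  (∀ z, 0 ≤ π z) ∧
  (∀ X : Fin K → Fin L → Ω, ∑ y : Fin L → Ω, π (X, y) = ∏ k : Fin K, p (X k)) ∧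
  (∀ y : Fin L → Ω, ∑ X : Fin K → Fin L → Ω, π (X, y) = q y)

/-- `π` is a conditionally i.i.d. coupling of `p^{⊗K}` and `q`: there is a kernel `κ`
from `Ω^L` to pmfs on `Ω^L` with `π(x_1, …, x_K, y) = q(y)·Π_k κ(y)(x_k)`. -/
def IsCondIIDCoupling {Ω : Type*} [Fintype Ω] {L K : ℕ} (p q : (Fin L → Ω) → ℝ)
    (π : (Fin K → Fin L → Ω) × (Fin L → Ω) → ℝ) : Prop :=
  IsCoupling p q π ∧
  ∃ κ : (Fin L → Ω) → (Fin L → Ω) → ℝ,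
    (∀ y x, 0 ≤ κ y x) ∧ (∀ y, ∑ x : Fin L → Ω, κ y x = 1) ∧
    (∀ X : Fin K → Fin L → Ω, ∀ y : Fin L → Ω, π (X, y) = q y * ∏ k : Fin K, κ y (X k))

/-- Acceptance length `τ(x_1, …, x_K, y)`: the largest `i ∈ {0, …, L}` such that
some draft `x_k` agrees with `y` on the first `i` coordinates. -/
def accLen {Ω : Type*} {L K : ℕ} (X : Fin K → Fin L → Ω) (y : Fin L → Ω) : ℕ :=
  ((Finset.range (L + 1)).filter
    (fun i => ∃ k : Fin K, ∀ j : Fin L, (j : ℕ) < i → X k j = y j)).sup id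

lemma prefProb_nonneg {Ω : Type*} [Fintype Ω] {L i : ℕ} {q : (Fin L → Ω) → ℝ}
    (hq0 : ∀ s, 0 ≤ q s) (x : Fin i → Ω) : 0 ≤ prefProb q x :=
  Finset.sum_nonneg fun s _ => by by_cases h : HasPref s x <;> simp [h, hq0 s]

lemma sum_prefProb {Ω : Type*} [Fintype Ω] {L i : ℕ} (h : i ≤ L) (q : (Fin L → Ω) → ℝ) :
    ∑ x : Fin i → Ω, prefProb q x = ∑ s : Fin L → Ω, q s := by
  unfold prefProb
  rw [Finset.sum_comm]
  refine Finset.sum_congr rfl fun s _ => ?_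
  have key : ∀ x : Fin i → Ω, HasPref s x ↔ x = fun j => s (Fin.castLE h j) := by
    intro x
    constructor
    · intro hx; funext j
      have := hx (Fin.castLE h j) (by simpa using j.isLt)
      simpa using this.symm
    · rintro rfl j hj
      congr 1
  simp only [key]
  simp

/-- Remark 5.2 (convergence): if `q(x^i) > 0` implies `p(x^i) > 0` for every
prefix `x^i` with `1 ≤ i ≤ L`, then `Bound(K) ≤ L` for every `K ≥ 1`, and
`Bound(K) → L` as `K → ∞`. -/
theorem bound_tendsto_L
    {Ω : Type*} [Fintype Ω] [Nonempty Ω] {L : ℕ} (hL : 1 ≤ L)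
    (p q : (Fin L → Ω) → ℝ)
    (hp0 : ∀ s, 0 ≤ p s) (hp1 : ∑ s : Fin L → Ω, p s = 1)
    (hq0 : ∀ s, 0 ≤ q s) (hq1 : ∑ s : Fin L → Ω, q s = 1)
    (habs : ∀ (i : ℕ), 1 ≤ i → i ≤ L → ∀ x : Fin i → Ω,
      0 < prefProb q x → 0 < prefProb p x) :
    (∀ K : ℕ, 1 ≤ K → Bound p q K ≤ (L : ℝ)) ∧
    Filter.Tendsto (fun K : ℕ => Bound p q K) Filter.atTop (nhds (L : ℝ)) := by
  have hterm_le : ∀ (K : ℕ) (i : ℕ), i < L → ∀ x : Fin (i + 1) → Ω,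
      prefProb q x * (1 - (1 - min (prefProb p x / prefProb q x) 1) ^ K) ≤ prefProb q x := by
    intro K i hi x
    have hq : 0 ≤ prefProb q x := prefProb_nonneg hq0 x
    have hm1 : min (prefProb p x / prefProb q x) 1 ≤ 1 := min_le_right _ _
    have hpow : 0 ≤ (1 - min (prefProb p x / prefProb q x) 1) ^ K :=
      pow_nonneg (by linarith) K
    nlinarith
  constructor
  · intro K _
    unfold Bound
    calc ∑ i ∈ Finset.range L, ∑ x : Fin (i + 1) → Ω,
          prefProb q x * (1 - (1 - min (prefProb p x / prefProb q x) 1) ^ K)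
        ≤ ∑ i ∈ Finset.range L, ∑ x : Fin (i + 1) → Ω, prefProb q x := by
          refine Finset.sum_le_sum fun i hi => Finset.sum_le_sum fun x _ => ?_
          exact hterm_le K i (Finset.mem_range.mp hi) x
      _ = ∑ i ∈ Finset.range L, (1 : ℝ) := by
          refine Finset.sum_congr rfl fun i hi => ?_
          rw [sum_prefProb (Nat.succ_le_of_lt (Finset.mem_range.mp hi)) q, hq1]
      _ = (L : ℝ) := by simp
  · have hlim : (L : ℝ) = ∑ i ∈ Finset.range L, ∑ x : Fin (i + 1) → Ω, prefProb q x := by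
      rw [show (L : ℝ) = ∑ i ∈ Finset.range L, (1 : ℝ) by simp]
      refine Finset.sum_congr rfl fun i hi => ?_
      rw [sum_prefProb (Nat.succ_le_of_lt (Finset.mem_range.mp hi)) q, hq1]
    rw [hlim]
    simp only [Bound]
    refine tendsto_finset_sum _ fun i hi => tendsto_finset_sum _ fun x _ => ?_
    rcases eq_or_lt_of_le (prefProb_nonneg hq0 x) with hq | hq
    · simpa [← hq] using tendsto_const_nhds (x := (0 : ℝ)) (f := Filter.atTop (α := ℕ))
    · have hp : 0 < prefProb p x :=
        habs (i + 1) (Nat.le_add_left 1 i) (Nat.succ_le_of_lt (Finset.mem_range.mp hi)) x hq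
      set m := min (prefProb p x / prefProb q x) 1 with hm
      have hm0 : 0 < m := lt_min (div_pos hp hq) one_pos
      have hm1 : m ≤ 1 := min_le_right _ _
      have h1 : |1 - m| < 1 := by rw [abs_lt]; constructor <;> linarith
      have hpow : Filter.Tendsto (fun K : ℕ => (1 - m) ^ K) Filter.atTop (nhds 0) :=
        tendsto_pow_atTop_nhds_zero_of_abs_lt_one h1
      have := ((tendsto_const_nhds (x := (1 : ℝ))).sub hpow).const_mul (prefProb q x)
      simpa using this
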